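/- Let λ > 0, L ∈ ℕ with L ≥ 1, and let a : ℤ → ℝ be a sequence such that (Δ^L a)[k] ∈ [−λ, λ) for every k ∈ ℤ. Then the L-th order differences of a can be recovered exactly from the modulo-folded sequence: (Δ^L a)[k] = 𝓜_λ((Δ^L(𝓜_λ ∘ a))[k]) for all k ∈ ℤ. -/

import Mathlib

/-- The centered modulo map `𝓜_λ(r) = 2λ(⟦r/(2λ) + 1/2⟧ − 1/2)`,
where `⟦x⟧ = x − ⌊x⌋` is the fractional part. -/
noncomputable def centeredModulo (lam r : ℝ) : ℝ :=
  2 * lam * (Int.fract (r / (2 * lam) + 1 / 2) - 1 / 2)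

/-- First-order finite difference: `(Δa)[k] = a[k+1] − a[k]`. -/
def fdiff (a : ℤ → ℝ) : ℤ → ℝ := fun k => a (k + 1) - a k

/-!
Folding changes each sample `a j` by an integer multiple of `2λ`. The operator `Δ^L` is additive
with integer coefficients, so `Δ^L a` and `Δ^L (𝓜_λ ∘ a)` also differ by a multiple of `2λ`.
Since `𝓜_λ` is `2λ`-periodic and is the identity on `[-λ, λ)`, folding `Δ^L (𝓜_λ ∘ a)` returns
`Δ^L a`.
-/

section CenteredModulo

variable {lam : ℝ}

theorem sub_centeredModulo_mem_zmultiples (hlam : lam ≠ 0) (r : ℝ) :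
    r - centeredModulo lam r ∈ AddSubgroup.zmultiples (2 * lam) := by
  refine AddSubgroup.mem_zmultiples_iff.mpr ⟨⌊r / (2 * lam) + 1 / 2⌋, ?_⟩
  rw [zsmul_eq_mul, centeredModulo, ← Int.self_sub_fract]
  field_simp
  ring

theorem centeredModulo_periodic (hlam : lam ≠ 0) :
    Function.Periodic (centeredModulo lam) (2 * lam) := by
  intro r
  have hshift : (r + 2 * lam) / (2 * lam) + 1 / 2 = r / (2 * lam) + 1 / 2 + 1 := by
    field_simp
    ring
  rw [centeredModulo, centeredModulo, hshift, Int.fract_add_one]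

theorem centeredModulo_eq_of_sub_mem_zmultiples (hlam : lam ≠ 0) {r s : ℝ}
    (h : r - s ∈ AddSubgroup.zmultiples (2 * lam)) :
    centeredModulo lam r = centeredModulo lam s := by
  obtain ⟨n, hn⟩ := AddSubgroup.mem_zmultiples_iff.mp h
  rw [← (centeredModulo_periodic hlam).sub_zsmul_eq n, hn, sub_sub_cancel]

theorem centeredModulo_eq_self (hlam : 0 < lam) {r : ℝ} (hr : r ∈ Set.Ico (-lam) lam) :
    centeredModulo lam r = r := by
  have h2lam : (0 : ℝ) < 2 * lam := by positivity
  have hshift : r / (2 * lam) + 1 / 2 = (r + lam) / (2 * lam) := by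
    field_simp
  have hfract : Int.fract ((r + lam) / (2 * lam)) = (r + lam) / (2 * lam) :=
    Int.fract_eq_self.mpr ⟨div_nonneg (by linarith [hr.1]) h2lam.le,
      (div_lt_one h2lam).mpr (by linarith [hr.2])⟩
  rw [centeredModulo, hshift, hfract]
  field_simp
  ring

end CenteredModulo

theorem fdiff_sub (a b : ℤ → ℝ) : fdiff (a - b) = fdiff a - fdiff b := by
  funext k
  simp only [fdiff, Pi.sub_apply]
  ring

theorem iterate_fdiff_sub (L : ℕ) (a b : ℤ → ℝ) :
    fdiff^[L] (a - b) = fdiff^[L] a - fdiff^[L] b := by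
  induction L generalizing a b with
  | zero => rfl
  | succ L ih => simp only [Function.iterate_succ_apply, fdiff_sub, ih]

theorem iterate_fdiff_mem (S : AddSubgroup ℝ) (L : ℕ) {a : ℤ → ℝ} (ha : ∀ j, a j ∈ S)
    (k : ℤ) : fdiff^[L] a k ∈ S := by
  induction L generalizing a with
  | zero => exact ha k
  | succ L ih => exact ih fun j => S.sub_mem (ha (j + 1)) (ha j)

theorem fdiff_iterate_recovery_from_modulo_general (lam : ℝ) (hlam : 0 < lam)
    (L : ℕ) (a : ℤ → ℝ)
    (hbound : ∀ k : ℤ, fdiff^[L] a k ∈ Set.Ico (-lam) lam) :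
    ∀ k : ℤ, fdiff^[L] a k =
      centeredModulo lam (fdiff^[L] (fun j => centeredModulo lam (a j)) k) := by
  intro k
  have hfold : fdiff^[L] (a - fun j => centeredModulo lam (a j)) k ∈
      AddSubgroup.zmultiples (2 * lam) :=
    iterate_fdiff_mem _ L (sub_centeredModulo_mem_zmultiples hlam.ne' <| a ·) k
  rw [iterate_fdiff_sub, Pi.sub_apply] at hfold
  rw [← centeredModulo_eq_of_sub_mem_zmultiples hlam.ne' hfold,
    centeredModulo_eq_self hlam (hbound k)]

theorem fdiff_iterate_recovery_from_modulo (lam : ℝ) (hlam : 0 < lam)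
    (L : ℕ) (hL : 1 ≤ L) (a : ℤ → ℝ)
    (hbound : ∀ k : ℤ, fdiff^[L] a k ∈ Set.Ico (-lam) lam) :
    ∀ k : ℤ, fdiff^[L] a k =
      centeredModulo lam (fdiff^[L] (fun j => centeredModulo lam (a j)) k) :=
  fdiff_iterate_recovery_from_modulo_general lam hlam L a hbound
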